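/- arXiv:1707.01666 — 5 statements merged into one kernel-verified Lean document; each statement's English description precedes it below -/
import Mathlib

section
/- Let n₁, n₂, n₃, n be integers satisfying n = n₁ − n₂ + n₃, n₁ ≠ n, and n₃ ≠ n. Then |φ(n₁,n₂,n₃,n)| ≥ 1; in particular the phase function does not vanish on the non-resonant set. -/
/-!
On the hyperplane `n = n₁ - n₂ + n₃` the quartic phase factors as
`-(n₁ - n)(n₃ - n)(n₁² + n₂² + n₃² + n² + 2(n₁ + n₃)²)`.
Off the resonant lines `n₁ = n`, `n₃ = n` the first two factors are nonzero, and the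
last is positive because it dominates `n₁² + n² ≥ (n₁ - n)² / 2`; so the phase is a
nonzero integer.
-/

theorem phase_eq_neg_mul_of_eq_sub_add {R : Type*} [CommRing R] {n₁ n₂ n₃ n : R}
    (h : n = n₁ - n₂ + n₃) :
    n₁ ^ 4 - n₂ ^ 4 + n₃ ^ 4 - n ^ 4 =
      -((n₁ - n) * (n₃ - n) * (n₁ ^ 2 + n₂ ^ 2 + n₃ ^ 2 + n ^ 2 + 2 * (n₁ + n₃) ^ 2)) := by
  subst h
  ring

theorem phase_cofactor_pos {R : Type*} [CommRing R] [LinearOrder R] [IsStrictOrderedRing R]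
    {n₁ n : R} (n₂ n₃ : R) (h₁ : n₁ ≠ n) :
    0 < n₁ ^ 2 + n₂ ^ 2 + n₃ ^ 2 + n ^ 2 + 2 * (n₁ + n₃) ^ 2 := by
  have hsq : 0 < (n₁ - n) ^ 2 := sq_pos_of_ne_zero (sub_ne_zero.2 h₁)
  nlinarith [sq_nonneg (n₁ + n), sq_nonneg n₂, sq_nonneg n₃, sq_nonneg (n₁ + n₃)]

/-- For integers `n₁, n₂, n₃, n` with `n = n₁ - n₂ + n₃`, `n₁ ≠ n`, and `n₃ ≠ n`,
the phase function `φ = n₁⁴ - n₂⁴ + n₃⁴ - n⁴` satisfies `|φ| ≥ 1`; in particular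
it does not vanish on the non-resonant set. -/
theorem phase_nonresonant_lower_bound (n₁ n₂ n₃ n : ℤ) (h : n = n₁ - n₂ + n₃)
    (h₁ : n₁ ≠ n) (h₃ : n₃ ≠ n) :
    1 ≤ |n₁ ^ 4 - n₂ ^ 4 + n₃ ^ 4 - n ^ 4| := by
  refine Int.one_le_abs ?_
  rw [phase_eq_neg_mul_of_eq_sub_add h, neg_ne_zero]
  exact mul_ne_zero (mul_ne_zero (sub_ne_zero.2 h₁) (sub_ne_zero.2 h₃))
    (phase_cofactor_pos n₂ n₃ h₁).ne'
end

section
/- Let n₁, n₂, n₃, n be integers, not all zero, satisfying n = n₁ − n₂ + n₃, and set M = max(|n₁|, |n₂|, |n₃|, |n|). Then (1/2)·M²·|n₁² − n₂² + n₃² − n²| ≤ |φ(n₁,n₂,n₃,n)| ≤ 6·M²·|n₁² − n₂² + n₃² − n²|. -/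
/-!
Under the resonance relation `d = a - b + c` the quartic phase factors through the quadratic one:
`2 (a⁴ - b⁴ + c⁴ - d⁴) = (a² - b² + c² - d²) · W` with the weight
`W = a² + b² + c² + d² + 2 (a + c)²`. The weight is a sum of squares dominating each of `a², b², c², d²`,
so `M² ≤ W`, while `W = 3a² + b² + 3c² + d² + 4ac ≤ 12 M²`.
-/

section PhaseWeight

variable {R : Type*}

def phaseWeight [CommRing R] (a b c d : R) : R :=
  a ^ 2 + b ^ 2 + c ^ 2 + d ^ 2 + 2 * (a + c) ^ 2

theorem two_mul_quartic_phase_eq [CommRing R] {a b c d : R} (h : d = a - b + c) :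
    2 * (a ^ 4 - b ^ 4 + c ^ 4 - d ^ 4) = (a ^ 2 - b ^ 2 + c ^ 2 - d ^ 2) * phaseWeight a b c d := by
  subst h; unfold phaseWeight; ring

variable [CommRing R] [LinearOrder R] [IsStrictOrderedRing R]

theorem phaseWeight_nonneg (a b c d : R) : 0 ≤ phaseWeight a b c d := by
  unfold phaseWeight; positivity

theorem sq_max_abs_le_phaseWeight (a b c d : R) :
    max (max |a| |b|) (max |c| |d|) ^ 2 ≤ phaseWeight a b c d := by
  have := sq_nonneg a; have := sq_nonneg b; have := sq_nonneg c; have := sq_nonneg d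
  have := sq_nonneg (a + c)
  unfold phaseWeight
  rcases max_choice (max |a| |b|) (max |c| |d|) with hM | hM <;> rw [hM]
  · rcases max_choice |a| |b| with hx | hx <;> rw [hx, sq_abs] <;> linarith
  · rcases max_choice |c| |d| with hx | hx <;> rw [hx, sq_abs] <;> linarith

theorem phaseWeight_le_twelve_mul_sq_max_abs (a b c d : R) :
    phaseWeight a b c d ≤ 12 * max (max |a| |b|) (max |c| |d|) ^ 2 := by
  set M := max (max |a| |b|) (max |c| |d|)
  have sq_le (x : R) (hx : |x| ≤ M) : x ^ 2 ≤ M ^ 2 := sq_le_sq.2 (hx.trans (le_abs_self M))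
  have ha : |a| ≤ M := le_max_of_le_left (le_max_left _ _)
  have hc : |c| ≤ M := le_max_of_le_right (le_max_left _ _)
  have hac : a * c ≤ M ^ 2 := calc
    a * c ≤ |a| * |c| := by rw [← abs_mul]; exact le_abs_self _
    _ ≤ M * M := mul_le_mul ha hc (abs_nonneg c) ((abs_nonneg a).trans ha)
    _ = M ^ 2 := (sq M).symm
  have := sq_le a ha
  have := sq_le b (le_max_of_le_left (le_max_right _ _))
  have := sq_le c hc
  have := sq_le d (le_max_of_le_right (le_max_right _ _))
  have hW : phaseWeight a b c d = 3 * a ^ 2 + b ^ 2 + 3 * c ^ 2 + d ^ 2 + 4 * (a * c) := by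
    unfold phaseWeight; ring
  linarith

theorem quartic_phase_comparison {a b c d : R} (h : d = a - b + c) :
    max (max |a| |b|) (max |c| |d|) ^ 2 * |a ^ 2 - b ^ 2 + c ^ 2 - d ^ 2| ≤
        2 * |a ^ 4 - b ^ 4 + c ^ 4 - d ^ 4| ∧
      |a ^ 4 - b ^ 4 + c ^ 4 - d ^ 4| ≤
        6 * max (max |a| |b|) (max |c| |d|) ^ 2 * |a ^ 2 - b ^ 2 + c ^ 2 - d ^ 2| := by
  have habs : 2 * |a ^ 4 - b ^ 4 + c ^ 4 - d ^ 4| =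
      |a ^ 2 - b ^ 2 + c ^ 2 - d ^ 2| * phaseWeight a b c d := by
    rw [← abs_two, ← abs_mul, two_mul_quartic_phase_eq h, abs_mul,
      abs_of_nonneg (phaseWeight_nonneg a b c d)]
  have hμ := abs_nonneg (a ^ 2 - b ^ 2 + c ^ 2 - d ^ 2)
  constructor
  · rw [habs, mul_comm]
    exact mul_le_mul_of_nonneg_left (sq_max_abs_le_phaseWeight a b c d) hμ
  · have := mul_le_mul_of_nonneg_left (phaseWeight_le_twelve_mul_sq_max_abs a b c d) hμ
    linarith

end PhaseWeight

theorem phase_comparison_general (n₁ n₂ n₃ n : ℤ) (h : n = n₁ - n₂ + n₃) :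
    (1 / 2 : ℝ) * ((max (max |n₁| |n₂|) (max |n₃| |n|) : ℤ) : ℝ) ^ 2 *
        |(n₁ : ℝ) ^ 2 - (n₂ : ℝ) ^ 2 + (n₃ : ℝ) ^ 2 - (n : ℝ) ^ 2| ≤
      |(n₁ : ℝ) ^ 4 - (n₂ : ℝ) ^ 4 + (n₃ : ℝ) ^ 4 - (n : ℝ) ^ 4| ∧
    |(n₁ : ℝ) ^ 4 - (n₂ : ℝ) ^ 4 + (n₃ : ℝ) ^ 4 - (n : ℝ) ^ 4| ≤
      6 * ((max (max |n₁| |n₂|) (max |n₃| |n|) : ℤ) : ℝ) ^ 2 *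
        |(n₁ : ℝ) ^ 2 - (n₂ : ℝ) ^ 2 + (n₃ : ℝ) ^ 2 - (n : ℝ) ^ 2| := by
  have hcast : (n : ℝ) = n₁ - n₂ + n₃ := by rw [h]; push_cast; ring
  obtain ⟨hlow, hup⟩ := quartic_phase_comparison hcast
  push_cast
  exact ⟨by linarith, hup⟩

/-- For integers `n₁, n₂, n₃, n`, not all zero, with `n = n₁ - n₂ + n₃`, and
`M = max(|n₁|, |n₂|, |n₃|, |n|)`, the fourth order phase `φ = n₁⁴ - n₂⁴ + n₃⁴ - n⁴`
is comparable to `M² |μ|` where `μ = n₁² - n₂² + n₃² - n²`: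
`(1/2) M² |μ| ≤ |φ| ≤ 6 M² |μ|`. -/
theorem phase_comparison (n₁ n₂ n₃ n : ℤ) (h : n = n₁ - n₂ + n₃)
    (hne : ¬(n₁ = 0 ∧ n₂ = 0 ∧ n₃ = 0 ∧ n = 0)) :
    (1 / 2 : ℝ) * ((max (max |n₁| |n₂|) (max |n₃| |n|) : ℤ) : ℝ) ^ 2 *
        |(n₁ : ℝ) ^ 2 - (n₂ : ℝ) ^ 2 + (n₃ : ℝ) ^ 2 - (n : ℝ) ^ 2| ≤
      |(n₁ : ℝ) ^ 4 - (n₂ : ℝ) ^ 4 + (n₃ : ℝ) ^ 4 - (n : ℝ) ^ 4| ∧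
    |(n₁ : ℝ) ^ 4 - (n₂ : ℝ) ^ 4 + (n₃ : ℝ) ^ 4 - (n : ℝ) ^ 4| ≤
      6 * ((max (max |n₁| |n₂|) (max |n₃| |n|) : ℤ) : ℝ) ^ 2 *
        |(n₁ : ℝ) ^ 2 - (n₂ : ℝ) ^ 2 + (n₃ : ℝ) ^ 2 - (n : ℝ) ^ 2| :=
  phase_comparison_general n₁ n₂ n₃ n h
end

section
/- Let s be a real number with 0 ≤ s ≤ 1. Then there exists a constant C > 0 such that for every integer n, the sum over all pairs of integers (n₁, n₃) with n₁ ≠ n and n₃ ≠ n of (1 + n²)^{2s} / φ(n₁, n₁ + n₃ − n, n₃, n)² is at most C. -/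
/-!
Put `a = n₁ - n` and `b = n₃ - n`. Then `φ = -a b Q` with
`Q = 3 (2n + a + b)² + a² + b²`, and for nonzero integers `a`, `b` the quadratic form `Q`
dominates `1 + n²`. Hence each summand is at most `(1 + n²)² / (a² b² Q²) ≤ 9 / (4 a² b²)`,
whose sum over `a, b` is finite and, after the shift, independent of `n`.
-/

lemma quartic_phase_eq {R : Type*} [CommRing R] (n a b : R) :
    (n + a) ^ 4 - (n + a + b) ^ 4 + (n + b) ^ 4 - n ^ 4 =
      -(a * b * (3 * (2 * n + a + b) ^ 2 + a ^ 2 + b ^ 2)) := by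
  ring

lemma two_mul_one_add_sq_le (n a b : ℝ) (ha : 1 ≤ a ^ 2) (hb : 1 ≤ b ^ 2) :
    2 * (1 + n ^ 2) ≤ 3 * (3 * (2 * n + a + b) ^ 2 + a ^ 2 + b ^ 2) := by
  nlinarith [sq_nonneg (2 * n + a + b + (a + b)), sq_nonneg (a - b), sq_nonneg (2 * n + a + b)]

lemma one_add_sq_rpow_le_sq (x : ℝ) {s : ℝ} (hs : s ≤ 1) :
    (1 + x ^ 2) ^ (2 * s) ≤ (1 + x ^ 2) ^ 2 := by
  have h := Real.rpow_le_rpow_of_exponent_le (by nlinarith [sq_nonneg x] : 1 ≤ 1 + x ^ 2)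
    (by push_cast; linarith : 2 * s ≤ (2 : ℕ))
  rwa [Real.rpow_natCast] at h

lemma one_add_sq_rpow_div_phase_sq_le {s : ℝ} (hs : s ≤ 1) (n a b : ℝ) (ha : 1 ≤ a ^ 2)
    (hb : 1 ≤ b ^ 2) :
    (1 + n ^ 2) ^ (2 * s) / (a * b * (3 * (2 * n + a + b) ^ 2 + a ^ 2 + b ^ 2)) ^ 2 ≤
      9 / 4 * (1 / (a ^ 2 * b ^ 2)) := by
  set Q := 3 * (2 * n + a + b) ^ 2 + a ^ 2 + b ^ 2
  have hQ : 2 * (1 + n ^ 2) ≤ 3 * Q := two_mul_one_add_sq_le n a b ha hb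
  have hQ_pos : 0 < Q := by nlinarith [sq_nonneg n]
  have hab : 0 < a ^ 2 * b ^ 2 := by positivity
  calc (1 + n ^ 2) ^ (2 * s) / (a * b * Q) ^ 2
      ≤ (1 + n ^ 2) ^ 2 / (a ^ 2 * b ^ 2 * Q ^ 2) := by
        rw [show (a * b * Q) ^ 2 = a ^ 2 * b ^ 2 * Q ^ 2 by ring]
        gcongr
        exact one_add_sq_rpow_le_sq n hs
    _ ≤ (3 / 2 * Q) ^ 2 / (a ^ 2 * b ^ 2 * Q ^ 2) := by
        gcongr
        linarith
    _ = 9 / 4 * (1 / (a ^ 2 * b ^ 2)) := by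
        field_simp
        norm_num

lemma one_le_sub_sq_of_ne {m n : ℤ} (h : m ≠ n) : (1 : ℝ) ≤ ((m : ℝ) - n) ^ 2 := by
  rw [one_le_sq_iff_one_le_abs]
  exact_mod_cast Int.one_le_abs (sub_ne_zero.mpr h)

lemma summable_inv_sq_mul_inv_sq :
    Summable (fun q : ℤ × ℤ => 1 / ((q.1 : ℝ) ^ 2 * (q.2 : ℝ) ^ 2)) := by
  have h : Summable (fun k : ℤ => 1 / (k : ℝ) ^ 2) :=
    Real.summable_one_div_int_pow.mpr one_lt_two
  simpa only [one_div, mul_inv] using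
    (h.mul_of_nonneg h (fun _ => by positivity) (fun _ => by positivity))

theorem phase_weighted_sum_bound_general (s : ℝ) (hs₁ : s ≤ 1) :
    ∃ C : ℝ, 0 < C ∧ ∀ n : ℤ,
      (∑' p : ℤ × ℤ,
        if p.1 ≠ n ∧ p.2 ≠ n then
          (1 + (n : ℝ) ^ 2) ^ (2 * s) /
            (((p.1 ^ 4 - (p.1 + p.2 - n) ^ 4 + p.2 ^ 4 - n ^ 4 : ℤ) : ℝ)) ^ 2
        else 0) ≤ C := by
  set F : ℤ × ℤ → ℝ := fun q => 9 / 4 * (1 / ((q.1 : ℝ) ^ 2 * (q.2 : ℝ) ^ 2))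
  have hF : Summable F := summable_inv_sq_mul_inv_sq.mul_left _
  refine ⟨∑' q, F q, hF.tsum_pos (fun _ => by positivity) (1, 1) (by norm_num [F]), fun n => ?_⟩
  let e := (Equiv.subRight n).prodCongr (Equiv.subRight n)
  have hle : ∀ p : ℤ × ℤ, (if p.1 ≠ n ∧ p.2 ≠ n then
      (1 + (n : ℝ) ^ 2) ^ (2 * s) /
        (((p.1 ^ 4 - (p.1 + p.2 - n) ^ 4 + p.2 ^ 4 - n ^ 4 : ℤ) : ℝ)) ^ 2 else 0) ≤ F (e p) := by
    rintro ⟨n₁, n₃⟩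
    split_ifs with h
    · have hφ : (((n₁ ^ 4 - (n₁ + n₃ - n) ^ 4 + n₃ ^ 4 - n ^ 4 : ℤ) : ℝ)) =
          -(((n₁ : ℝ) - n) * ((n₃ : ℝ) - n) * (3 * (2 * (n : ℝ) + (n₁ - n) + (n₃ - n)) ^ 2 +
            ((n₁ : ℝ) - n) ^ 2 + ((n₃ : ℝ) - n) ^ 2)) := by
        rw [← quartic_phase_eq]; push_cast; ring
      rw [hφ, neg_sq]
      simpa [F, e] using one_add_sq_rpow_div_phase_sq_le hs₁ n (n₁ - n) (n₃ - n)
        (one_le_sub_sq_of_ne h.1) (one_le_sub_sq_of_ne h.2)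
    · positivity
  have hFe : Summable (F ∘ e) := e.summable_iff.mpr hF
  calc _ ≤ ∑' p, F (e p) :=
        Summable.tsum_le_tsum hle (hFe.of_nonneg_of_le (fun _ => by positivity) hle) hFe
    _ = ∑' q, F q := e.tsum_eq F

/-- For `0 ≤ s ≤ 1` there is a constant `C > 0` such that for every `n : ℤ`, the sum
over all pairs `(n₁, n₃)` with `n₁ ≠ n`, `n₃ ≠ n` (and `n₂ := n₁ + n₃ - n`) of
`⟨n⟩^{4s} / φ(n₁,n₂,n₃,n)²` is at most `C`. -/
theorem phase_weighted_sum_bound (s : ℝ) (hs₀ : 0 ≤ s) (hs₁ : s ≤ 1) :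
    ∃ C : ℝ, 0 < C ∧ ∀ n : ℤ,
      (∑' p : ℤ × ℤ,
        if p.1 ≠ n ∧ p.2 ≠ n then
          (1 + (n : ℝ) ^ 2) ^ (2 * s) /
            (((p.1 ^ 4 - (p.1 + p.2 - n) ^ 4 + p.2 ^ 4 - n ^ 4 : ℤ) : ℝ)) ^ 2
        else 0) ≤ C :=
  phase_weighted_sum_bound_general s hs₁
end

section
/- For every δ > 0 there exists a constant C = C(δ) > 0 such that for every integer n and every nonzero integer m, the number of pairs of integers (n₁, n₃) with n₁ ≠ n, n₃ ≠ n, and φ(n₁, n₁ + n₃ − n, n₃, n) = m is at most C·|m|^δ. -/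
/-!
Writing `n₂ = n₁ + n₃ - n`, the phase factors as `(n₁ - n) (n - n₃) Q` with an integer `Q`,
so for `m ≠ 0` both `n₁ - n` and `n₃ - n` are divisors of `m`. Hence the level set has at most
`d(m)²` points, where `d(m) = 2 d(|m|)` counts the integer divisors, and the classical bound
`d(k) ≤ C_ε k^ε` with `ε = δ / 2` finishes. That bound follows from `d(k) = ∏ (eₚ + 1)`:
Bernoulli's inequality gives `e + 1 ≤ (p^ε)^e` once `p^ε ≥ 2`, and `e + 1 ≤ B (p^ε)^e` with
`B = 2^ε / (2^ε - 1)` for each of the finitely many remaining primes.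
-/

open Finset

lemma natCast_add_one_le_pow_of_two_le {t : ℝ} (ht : 2 ≤ t) (e : ℕ) : (e + 1 : ℝ) ≤ t ^ e :=
  calc (e + 1 : ℝ) ≤ 2 ^ e := by exact_mod_cast Nat.lt_two_pow_self
    _ ≤ t ^ e := pow_le_pow_left₀ zero_le_two ht e

lemma natCast_add_one_le_mul_pow {s t : ℝ} (hs : 1 < s) (hst : s ≤ t) (e : ℕ) :
    (e + 1 : ℝ) ≤ s / (s - 1) * t ^ e := by
  have bernoulli : 1 + (e + 1 : ℕ) * (s - 1) ≤ s ^ (e + 1) := one_add_mul_sub_le_pow (by linarith) _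
  calc (e + 1 : ℝ) ≤ s ^ (e + 1) / (s - 1) := by
        rw [le_div_iff₀ (by linarith)]; push_cast at bernoulli; linarith
    _ = s / (s - 1) * s ^ e := by ring
    _ ≤ s / (s - 1) * t ^ e := by gcongr

lemma Nat.cast_rpow_eq_prod_primeFactors {k : ℕ} (hk : k ≠ 0) (ε : ℝ) :
    (k : ℝ) ^ ε = ∏ p ∈ k.primeFactors, ((p : ℝ) ^ ε) ^ k.factorization p := by
  conv_lhs => rw [Nat.prod_primeFactors_pow_factorization hk]
  push_cast
  rw [← Real.finsetProd_rpow _ _ fun p _ ↦ by positivity]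
  exact prod_congr rfl fun p _ ↦ (Real.rpow_pow_comm p.cast_nonneg ε _).symm

theorem Nat.card_divisors_le_mul_rpow {ε : ℝ} (hε : 0 < ε) :
    ∃ C : ℝ, 0 < C ∧ ∀ k : ℕ, k ≠ 0 → (#k.divisors : ℝ) ≤ C * (k : ℝ) ^ ε := by
  have hs : 1 < (2 : ℝ) ^ ε := Real.one_lt_rpow one_lt_two hε
  set B := (2 : ℝ) ^ ε / ((2 : ℝ) ^ ε - 1)
  have hB : 1 ≤ B := by rw [le_div_iff₀ (by linarith)]; linarith
  -- only the primes `p ≤ N` can have `p ^ ε < 2`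
  set N := ⌈(2 : ℝ) ^ ε⁻¹⌉₊
  let c : ℕ → ℝ := fun p ↦ if p ≤ N then B else 1
  have hc : ∀ k : ℕ, ∏ p ∈ k.primeFactors, c p ≤ B ^ N := fun k ↦ by
    rw [prod_ite, prod_const_one, mul_one, prod_const]
    refine pow_le_pow_right₀ hB ((card_le_card fun p hp ↦ ?_).trans (Nat.card_Icc 1 N).le)
    rw [mem_filter, Nat.mem_primeFactors] at hp
    exact mem_Icc.mpr ⟨hp.1.1.one_lt.le, hp.2⟩
  have hfactor : ∀ p e : ℕ, p.Prime → (e + 1 : ℝ) ≤ c p * ((p : ℝ) ^ ε) ^ e := fun p e hp ↦ by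
    by_cases hpN : p ≤ N
    · simp only [c, if_pos hpN]
      refine natCast_add_one_le_mul_pow hs ?_ e
      exact Real.rpow_le_rpow zero_le_two (by exact_mod_cast hp.two_le) hε.le
    · simp only [c, if_neg hpN, one_mul]
      refine natCast_add_one_le_pow_of_two_le ?_ e
      have hNp : (2 : ℝ) ^ ε⁻¹ ≤ p := (Nat.le_ceil _).trans (by exact_mod_cast (not_le.mp hpN).le)
      calc (2 : ℝ) = ((2 : ℝ) ^ ε⁻¹) ^ ε := by
            rw [← Real.rpow_mul zero_le_two, inv_mul_cancel₀ hε.ne', Real.rpow_one]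
        _ ≤ (p : ℝ) ^ ε := Real.rpow_le_rpow (by positivity) hNp hε.le
  refine ⟨B ^ N, by positivity, fun k hk ↦ ?_⟩
  calc (#k.divisors : ℝ) = ∏ p ∈ k.primeFactors, ((k.factorization p : ℝ) + 1) := by
        rw [Nat.card_divisors hk]; push_cast; rfl
    _ ≤ ∏ p ∈ k.primeFactors, c p * ((p : ℝ) ^ ε) ^ k.factorization p :=
        prod_le_prod (fun _ _ ↦ by positivity)
          fun p hp ↦ hfactor p _ (Nat.prime_of_mem_primeFactors hp)
    _ ≤ B ^ N * (k : ℝ) ^ ε := by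
        rw [prod_mul_distrib, Nat.cast_rpow_eq_prod_primeFactors hk]
        exact mul_le_mul_of_nonneg_right (hc k) (prod_nonneg fun _ _ ↦ by positivity)

lemma Int.card_divisors (z : ℤ) : #z.divisors = 2 * #z.natAbs.divisors := by
  rw [Int.divisors, card_disjUnion, card_map, card_map, two_mul]

theorem Int.card_divisors_le_mul_rpow {ε : ℝ} (hε : 0 < ε) :
    ∃ C : ℝ, 0 < C ∧ ∀ z : ℤ, z ≠ 0 → (#z.divisors : ℝ) ≤ C * |(z : ℝ)| ^ ε := by
  obtain ⟨C, hC, hbound⟩ := Nat.card_divisors_le_mul_rpow hε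
  refine ⟨2 * C, by positivity, fun z hz ↦ ?_⟩
  rw [Int.card_divisors, Nat.cast_mul, Nat.cast_two, mul_assoc, ← Int.cast_abs,
    ← Nat.cast_natAbs]
  exact mul_le_mul_of_nonneg_left (hbound _ (Int.natAbs_ne_zero.mpr hz)) zero_le_two

lemma phase_eq_mul (n₁ n₃ n : ℤ) :
    n₁ ^ 4 - (n₁ + n₃ - n) ^ 4 + n₃ ^ 4 - n ^ 4 =
      (n₁ - n) * ((n - n₃) *
        (n₁ ^ 2 + (n₁ + n₃ - n) ^ 2 + n₃ ^ 2 + n ^ 2 + 2 * (n₁ + n₃) ^ 2)) := by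
  ring

def phaseLevelSet (n m : ℤ) : Set (ℤ × ℤ) :=
  {p | p.1 ≠ n ∧ p.2 ≠ n ∧ p.1 ^ 4 - (p.1 + p.2 - n) ^ 4 + p.2 ^ 4 - n ^ 4 = m}

lemma phaseLevelSet_subset {n m : ℤ} (hm : m ≠ 0) :
    phaseLevelSet n m ⊆ (m.divisors ×ˢ m.divisors).image fun q ↦ (q.1 + n, q.2 + n) := by
  rintro ⟨n₁, n₃⟩ ⟨-, -, hphase⟩
  have h₁ : n₁ - n ∣ m := hphase ▸ phase_eq_mul n₁ n₃ n ▸ dvd_mul_right _ _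
  have h₃ : n₃ - n ∣ m := by
    rw [← hphase, phase_eq_mul, mul_left_comm, ← neg_sub n₃, neg_mul, dvd_neg]
    exact dvd_mul_right _ _
  simp only [coe_image, coe_product, Set.mem_image, Set.mem_prod, mem_coe, Int.mem_divisors]
  exact ⟨(n₁ - n, n₃ - n), ⟨⟨h₁, hm⟩, h₃, hm⟩, by simp⟩

lemma ncard_phaseLevelSet_le {n m : ℤ} (hm : m ≠ 0) :
    (phaseLevelSet n m).ncard ≤ #m.divisors ^ 2 :=
  calc (phaseLevelSet n m).ncard
      ≤ #((m.divisors ×ˢ m.divisors).image fun q ↦ (q.1 + n, q.2 + n)) := by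
        rw [← Set.ncard_coe_finset]
        exact Set.ncard_le_ncard (phaseLevelSet_subset hm) (finite_toSet _)
    _ ≤ #m.divisors ^ 2 := card_image_le.trans (by rw [card_product, sq])

/-- Divisor counting bound: for every `δ > 0` there is `C > 0` such that for all
`n m : ℤ` with `m ≠ 0`, the number of pairs `(n₁, n₃)` with `n₁ ≠ n`, `n₃ ≠ n`, and
`φ(n₁, n₁ + n₃ - n, n₃, n) = m` is at most `C |m|^δ`. -/
theorem phase_level_set_count (δ : ℝ) (hδ : 0 < δ) :
    ∃ C : ℝ, 0 < C ∧ ∀ n m : ℤ, m ≠ 0 →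
      (Set.ncard {p : ℤ × ℤ | p.1 ≠ n ∧ p.2 ≠ n ∧
          p.1 ^ 4 - (p.1 + p.2 - n) ^ 4 + p.2 ^ 4 - n ^ 4 = m} : ℝ) ≤
        C * |(m : ℝ)| ^ δ := by
  obtain ⟨C, hC, hdiv⟩ := Int.card_divisors_le_mul_rpow (half_pos hδ)
  refine ⟨C ^ 2, by positivity, fun n m hm ↦ ?_⟩
  calc ((phaseLevelSet n m).ncard : ℝ) ≤ (#m.divisors : ℝ) ^ 2 := by
        exact_mod_cast ncard_phaseLevelSet_le hm
    _ ≤ (C * |(m : ℝ)| ^ (δ / 2)) ^ 2 := by gcongr; exact hdiv m hm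
    _ = C ^ 2 * |(m : ℝ)| ^ δ := by
        rw [mul_pow, ← Real.rpow_mul_natCast (abs_nonneg _)]; norm_num
end

section
/- There exist constants c₁, c₂ > 0 and x₀ ∈ (0,1) such that for all real x with 0 < x < x₀: c₁·x²·log(1/x) ≤ Σ_{n∈ℤ} |1 − e^{inx}|² / (1 + n²)^{3/2} ≤ c₂·x²·log(1/x). -/
/-!
Since `‖1 - e^{int}‖² = 4 sin²(nt/2)`, the summand is even in `n` and vanishes at `n = 0`, so
the sum is twice the sum over `n ≥ 1`. Put `N = ⌊1/x⌋`. For `1 ≤ n ≤ N` we have `nx ≤ 1`, so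
`sin²(nx/2) ≍ (nx)²` (Jordan's inequality) while `(1 + n²)^{3/2} ≍ n³`: these terms are
`≍ x²/n` and add up to `≍ x² H_N ≍ x² log(1/x)`. The tail `n > N` is at most
`∑_{n>N} 4/n³ ≤ 2/N² = O(x²)`, by telescoping against `2/(n-1)² - 2/n²`.
-/

open Real Finset

noncomputable def incrementSummand (x : ℝ) (n : ℤ) : ℝ :=
  ‖1 - Complex.exp (Complex.I * (n : ℂ) * (x : ℂ))‖ ^ 2 / (1 + (n : ℝ) ^ 2) ^ ((3 : ℝ) / 2)

lemma norm_one_sub_exp_I_mul_sq (t : ℝ) :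
    ‖1 - Complex.exp (Complex.I * t)‖ ^ 2 = 4 * sin (t / 2) ^ 2 := by
  rw [norm_sub_rev, Complex.norm_exp_I_mul_ofReal_sub_one, norm_mul, Real.norm_eq_abs, mul_pow,
    sq_abs]
  norm_num

lemma incrementSummand_eq (x : ℝ) (n : ℤ) :
    incrementSummand x n = 4 * sin (n * x / 2) ^ 2 / (1 + (n : ℝ) ^ 2) ^ ((3 : ℝ) / 2) := by
  rw [incrementSummand, mul_assoc, ← norm_one_sub_exp_I_mul_sq]
  push_cast
  rfl

lemma incrementSummand_nonneg (x : ℝ) (n : ℤ) : 0 ≤ incrementSummand x n := by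
  rw [incrementSummand]
  positivity

lemma incrementSummand_neg (x : ℝ) (n : ℤ) : incrementSummand x (-n) = incrementSummand x n := by
  simp only [incrementSummand_eq, Int.cast_neg, neg_mul, neg_div, sin_neg, neg_sq]

lemma incrementSummand_zero (x : ℝ) : incrementSummand x 0 = 0 := by
  simp [incrementSummand_eq]

lemma rpow_three_halves_eq_sqrt_pow {a : ℝ} (ha : 0 ≤ a) : a ^ ((3 : ℝ) / 2) = √a ^ 3 := by
  rw [sqrt_eq_rpow, ← rpow_natCast, ← rpow_mul ha]
  norm_num

lemma pow_three_le_one_add_sq_rpow {k : ℝ} (hk : 0 ≤ k) :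
    k ^ 3 ≤ (1 + k ^ 2) ^ ((3 : ℝ) / 2) := by
  rw [rpow_three_halves_eq_sqrt_pow (by positivity)]
  exact pow_le_pow_left₀ hk (le_sqrt_of_sq_le (by linarith)) 3

lemma one_add_sq_rpow_le {k : ℝ} (hk : 1 ≤ k) : (1 + k ^ 2) ^ ((3 : ℝ) / 2) ≤ 8 * k ^ 3 := by
  have : √(1 + k ^ 2) ≤ 2 * k := sqrt_le_iff.mpr ⟨by linarith, by nlinarith⟩
  rw [rpow_three_halves_eq_sqrt_pow (by positivity)]
  calc √(1 + k ^ 2) ^ 3 ≤ (2 * k) ^ 3 := pow_le_pow_left₀ (sqrt_nonneg _) this 3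
    _ = 8 * k ^ 3 := by ring

variable {x : ℝ} {n : ℤ}

lemma incrementSummand_le_sq_div (hn : 0 < n) : incrementSummand x n ≤ x ^ 2 / n := by
  have hk : (0 : ℝ) < n := by exact_mod_cast hn
  rw [incrementSummand_eq]
  calc 4 * sin (n * x / 2) ^ 2 / (1 + (n : ℝ) ^ 2) ^ ((3 : ℝ) / 2)
      ≤ (n * x) ^ 2 / (n : ℝ) ^ 3 := by
        gcongr
        · nlinarith [sin_sq_le_sq (x := n * x / 2)]
        · exact pow_three_le_one_add_sq_rpow hk.le
    _ = x ^ 2 / n := by field_simp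

lemma incrementSummand_le_four_div_cube (hn : 0 < n) :
    incrementSummand x n ≤ 4 / (n : ℝ) ^ 3 := by
  have hk : (0 : ℝ) < n := by exact_mod_cast hn
  rw [incrementSummand_eq]
  gcongr
  · nlinarith [sin_sq_le_one (n * x / 2)]
  · exact pow_three_le_one_add_sq_rpow hk.le

lemma sq_div_le_incrementSummand (hn : 0 < n) (hx : 0 ≤ x) (hnx : n * x ≤ π) :
    x ^ 2 / (2 * π ^ 2 * n) ≤ incrementSummand x n := by
  have hk : (1 : ℝ) ≤ n := by exact_mod_cast hn
  have hjordan : 2 / π * (n * x / 2) ≤ sin (n * x / 2) :=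
    mul_le_sin (by positivity) (by linarith)
  rw [incrementSummand_eq]
  calc x ^ 2 / (2 * π ^ 2 * n) = 4 * (2 / π * (n * x / 2)) ^ 2 / (8 * (n : ℝ) ^ 3) := by
        field_simp
        ring
    _ ≤ 4 * sin (n * x / 2) ^ 2 / (1 + (n : ℝ) ^ 2) ^ ((3 : ℝ) / 2) := by
        gcongr
        exact one_add_sq_rpow_le hk

lemma tsum_int_eq_two_nsmul_tsum_nat_succ {α : Type*} [AddCommMonoid α] [TopologicalSpace α]
    [ContinuousAdd α] [T2Space α] {f : ℤ → α} (hf : Summable fun n : ℕ ↦ f (n + 1))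
    (heven : ∀ n, f (-n) = f n) (hzero : f 0 = 0) :
    ∑' n, f n = 2 • ∑' n : ℕ, f (n + 1) := by
  rw [tsum_of_add_one_of_neg_add_one hf (by simpa only [heven] using hf), hzero, add_zero,
    two_nsmul]
  simp only [heven]

lemma Real.tsum_le_of_le_sub_succ {f g : ℕ → ℝ} (hf : ∀ n, 0 ≤ f n) (hg : ∀ n, 0 ≤ g n)
    (hfg : ∀ n, f n ≤ g n - g (n + 1)) : ∑' n, f n ≤ g 0 :=
  Real.tsum_le_of_sum_range_le hf fun N ↦ by
    calc ∑ n ∈ range N, f n ≤ ∑ n ∈ range N, (g n - g (n + 1)) := sum_le_sum fun n _ ↦ hfg n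
      _ = g 0 - g N := sum_range_sub' g N
      _ ≤ g 0 := sub_le_self _ (hg N)

lemma four_div_cube_le_sub {m : ℝ} (hm : 2 ≤ m) : 4 / m ^ 3 ≤ 2 / (m - 1) ^ 2 - 2 / m ^ 2 := by
  have hm1 : 0 < m - 1 := by linarith
  rw [div_sub_div _ _ (by positivity) (by positivity),
    div_le_div_iff₀ (by positivity) (by positivity)]
  nlinarith [mul_pos hm1 hm1, pow_pos hm1 3]

lemma summable_incrementSummand_nat_succ (x : ℝ) :
    Summable fun n : ℕ ↦ incrementSummand x (n + 1) := by
  refine .of_nonneg_of_le (fun n ↦ incrementSummand_nonneg x _)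
    (fun n ↦ incrementSummand_le_four_div_cube (by positivity)) ?_
  have := (summable_nat_add_iff 1).mpr ((summable_one_div_nat_pow (p := 3)).mpr (by norm_num))
  simpa [div_eq_mul_inv] using this.mul_left 4

lemma tsum_incrementSummand_eq (x : ℝ) :
    ∑' n, incrementSummand x n = 2 * ∑' n : ℕ, incrementSummand x (n + 1) := by
  rw [tsum_int_eq_two_nsmul_tsum_nat_succ (summable_incrementSummand_nat_succ x)
    (incrementSummand_neg x) (incrementSummand_zero x), two_nsmul, two_mul]

lemma harmonic_real_eq_sum (N : ℕ) :
    (harmonic N : ℝ) = ∑ n ∈ range N, 1 / ((n : ℝ) + 1) := by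
  simp [harmonic]

lemma sq_mul_log_le_tsum_incrementSummand (hx : 0 ≤ x) {N : ℕ} (hN : N * x ≤ 1) :
    x ^ 2 / (2 * π ^ 2) * log (N + 1) ≤ ∑' n : ℕ, incrementSummand x (n + 1) := by
  have hterm (n : ℕ) (hn : n ∈ range N) :
      x ^ 2 / (2 * π ^ 2) * (1 / ((n : ℝ) + 1)) ≤ incrementSummand x (n + 1) := by
    have hnN : (n : ℝ) + 1 ≤ N := by exact_mod_cast mem_range.mp hn
    have hnx : ((n + 1 : ℤ) : ℝ) * x ≤ π := by
      push_cast
      nlinarith [pi_gt_three]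
    have := sq_div_le_incrementSummand (by positivity) hx hnx
    push_cast at this
    convert this using 1
    field_simp
  calc x ^ 2 / (2 * π ^ 2) * log (N + 1) ≤ x ^ 2 / (2 * π ^ 2) * harmonic N := by
        gcongr
        exact_mod_cast log_add_one_le_harmonic N
    _ ≤ ∑ n ∈ range N, incrementSummand x (n + 1) := by
        rw [harmonic_real_eq_sum, mul_sum]
        exact sum_le_sum hterm
    _ ≤ ∑' n : ℕ, incrementSummand x (n + 1) :=
        (summable_incrementSummand_nat_succ x).sum_le_tsum _
          fun n _ ↦ incrementSummand_nonneg x _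

lemma tsum_incrementSummand_le (x : ℝ) {N : ℕ} (hN : 0 < N) :
    ∑' n : ℕ, incrementSummand x (n + 1) ≤ x ^ 2 * (1 + log N) + 2 / (N : ℝ) ^ 2 := by
  have hN1 : (1 : ℝ) ≤ N := by exact_mod_cast hN
  rw [← (summable_incrementSummand_nat_succ x).sum_add_tsum_nat_add N]
  gcongr ?_ + ?_
  · calc ∑ n ∈ range N, incrementSummand x (n + 1)
          ≤ ∑ n ∈ range N, x ^ 2 * (1 / ((n : ℝ) + 1)) :=
          sum_le_sum fun n _ ↦ by
            simpa [div_eq_mul_inv] using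
              incrementSummand_le_sq_div (x := x) (n := n + 1) (by positivity)
      _ = x ^ 2 * harmonic N := by rw [harmonic_real_eq_sum, mul_sum]
      _ ≤ x ^ 2 * (1 + log N) := by
          gcongr
          exact_mod_cast harmonic_le_one_add_log N
  · refine (Real.tsum_le_of_le_sub_succ (g := fun n ↦ 2 / ((n : ℝ) + N) ^ 2)
      (fun n ↦ incrementSummand_nonneg x _) (fun n ↦ by positivity) fun n ↦ ?_).trans_eq
      (by simp)
    have hm : (2 : ℝ) ≤ (((n + N : ℕ) + 1 : ℤ) : ℝ) := by
      push_cast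
      linarith [(n.cast_nonneg : (0 : ℝ) ≤ n)]
    have := (incrementSummand_le_four_div_cube (x := x) (by positivity)).trans
      (four_div_cube_le_sub hm)
    push_cast at this ⊢
    exact this.trans_eq (by ring)

/-- Critical case asymptotics: there are constants `c₁, c₂ > 0` and `x₀ ∈ (0,1)` such
that for `0 < x < x₀`,
`c₁ x² log(1/x) ≤ Σ_{n ∈ ℤ} |1 - e^{inx}|²/(1+n²)^{3/2} ≤ c₂ x² log(1/x)`. -/
theorem critical_increment_asympt :
    ∃ c₁ c₂ x₀ : ℝ, 0 < c₁ ∧ 0 < c₂ ∧ 0 < x₀ ∧ x₀ < 1 ∧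
      ∀ x : ℝ, 0 < x → x < x₀ →
        c₁ * x ^ 2 * Real.log (1 / x) ≤
          (∑' n : ℤ, ‖1 - Complex.exp (Complex.I * (n : ℂ) * (x : ℂ))‖ ^ 2 /
            (1 + (n : ℝ) ^ 2) ^ ((3 : ℝ) / 2)) ∧
        (∑' n : ℤ, ‖1 - Complex.exp (Complex.I * (n : ℂ) * (x : ℂ))‖ ^ 2 /
            (1 + (n : ℝ) ^ 2) ^ ((3 : ℝ) / 2)) ≤
          c₂ * x ^ 2 * Real.log (1 / x) := by
  refine ⟨1 / π ^ 2, 20, 1 / 3, by positivity, by norm_num, by norm_num, by norm_num,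
    fun x hx hx₀ ↦ ?_⟩
  have hlog : 1 ≤ log (1 / x) := by
    rw [le_log_iff_exp_le (by positivity), le_div_iff₀ hx]
    nlinarith [exp_one_lt_d9]
  set N := ⌊1 / x⌋₊
  have hNx : N * x ≤ 1 := (le_div_iff₀ hx).mp (Nat.floor_le (by positivity))
  have hxN : 1 < (N + 1) * x := (div_lt_iff₀ hx).mp (Nat.lt_floor_add_one _)
  have hN : 0 < N := Nat.floor_pos.mpr (by rw [le_div_iff₀ hx]; linarith)
  have hlog_lower : log (1 / x) ≤ log (N + 1) :=
    log_le_log (by positivity) ((div_lt_iff₀ hx).mpr hxN).le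
  have hlog_upper : log N ≤ log (1 / x) :=
    log_le_log (by positivity) (Nat.floor_le (by positivity))
  have htail : 2 / (N : ℝ) ^ 2 ≤ 8 * x ^ 2 := by
    rw [div_le_iff₀ (by positivity)]
    nlinarith
  have hlower := sq_mul_log_le_tsum_incrementSummand hx.le hNx
  have hupper := tsum_incrementSummand_le x hN
  change _ ≤ ∑' n, incrementSummand x n ∧ ∑' n, incrementSummand x n ≤ _
  rw [tsum_incrementSummand_eq]
  constructor
  · linear_combination 2 * hlower +
      2 * mul_le_mul_of_nonneg_left hlog_lower (by positivity : 0 ≤ x ^ 2 / (2 * π ^ 2))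
  · linarith [mul_le_mul_of_nonneg_left hlog_upper (sq_nonneg x),
      mul_le_mul_of_nonneg_left hlog (sq_nonneg x)]
end
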